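/- For all integers 0 ≤ k ≤ ℓ ≤ n, the strong chromatic index and the semistrong chromatic index of the subset graph S_n(k,ℓ) are both equal to the binomial coefficient C(n, ℓ−k). -/

import Mathlib

/-!
Colouring the edge `A ⊆ B` by the `(ℓ-k)`-set `B \ A` is a strong edge-colouring with
`C(n, ℓ-k)` colours: an endpoint of an edge together with its colour determines the edge.

For the lower bound, the edges `A ⊆ B` of one colour class of a semistrong colouring give
`k`-sets `A` and `(n-ℓ)`-sets `C = Bᶜ` with `A ∩ C = ∅`, and the degree-one endpoint of each edge
forces, for every edge, `A ∩ C' ≠ ∅` for all other edges, or `A' ∩ C ≠ ∅` for all other edges.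
Placing the points on the moment curve in `ℚ^(k+n-ℓ)`, the wedges over the sets `A` in
`⋀^k ℚ^(k+n-ℓ)` are linearly independent, since multiplying by the wedge over a set `C'` gives a
Vandermonde determinant or zero according as `A ∩ C'` is empty or not. So a colour class has at
most `C(k+n-ℓ, k)` edges, while the graph has `C(n,ℓ)·C(ℓ,k) = C(n,ℓ-k)·C(k+n-ℓ,k)` edges.
-/

open SimpleGraph

variable {V : Type*}

/-- The set of endvertices of the edges in `M`. -/
def edgeVerts (M : Set (Sym2 V)) : Set V := {v | ∃ e ∈ M, v ∈ e}

/-- `M` is a matching of the simple graph `G`: a set of edges of `G`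
that are pairwise disjoint. -/
def IsMatchingSet (G : SimpleGraph V) (M : Set (Sym2 V)) : Prop :=
  M ⊆ G.edgeSet ∧ ∀ e ∈ M, ∀ f ∈ M, e ≠ f → ∀ v : V, v ∈ e → v ∉ f

/-- `M` is a semistrong matching of `G`: a matching such that every edge of `M`
has an endvertex of degree one in the subgraph of `G` induced by the
endvertices of the edges of `M`. -/
def IsSemistrongMatching (G : SimpleGraph V) (M : Set (Sym2 V)) : Prop :=
  IsMatchingSet G M ∧
    ∀ e ∈ M, ∃ u v : V, e = s(u, v) ∧ ∀ w ∈ edgeVerts M, G.Adj u w → w = v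

/-- `G` has a semistrong edge-coloring with (at most) `k` colors: a proper
edge-coloring in which every color class is a semistrong matching. -/
def HasSemistrongEdgeColoring (G : SimpleGraph V) (k : ℕ) : Prop :=
  ∃ c : Sym2 V → ℕ, (∀ e ∈ G.edgeSet, c e < k) ∧
    ∀ i : ℕ, IsSemistrongMatching G {e | e ∈ G.edgeSet ∧ c e = i}

/-- The semistrong chromatic index of `G`. -/
noncomputable def ssChromIdx (G : SimpleGraph V) : ℕ :=
  sInf {k | HasSemistrongEdgeColoring G k}

/-- `M` is a strong (induced) matching of `G`: a matching such that the subgraph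
of `G` induced by the endvertices of `M` contains no edges other than those of `M`. -/
def IsStrongMatching (G : SimpleGraph V) (M : Set (Sym2 V)) : Prop :=
  IsMatchingSet G M ∧
    ∀ u ∈ edgeVerts M, ∀ w ∈ edgeVerts M, G.Adj u w → s(u, w) ∈ M

/-- `G` has a strong edge-coloring with (at most) `k` colors. -/
def HasStrongEdgeColoring (G : SimpleGraph V) (k : ℕ) : Prop :=
  ∃ c : Sym2 V → ℕ, (∀ e ∈ G.edgeSet, c e < k) ∧
    ∀ i : ℕ, IsStrongMatching G {e | e ∈ G.edgeSet ∧ c e = i}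

/-- The strong chromatic index of `G`. -/
noncomputable def strongChromIdx (G : SimpleGraph V) : ℕ :=
  sInf {k | HasStrongEdgeColoring G k}

/-- The subset graph `S_n(k,ℓ)`: the bipartite graph whose two vertex parts are
the `k`-element subsets and the `ℓ`-element subsets of an `n`-element set, with
a `k`-subset adjacent to an `ℓ`-subset iff one contains the other. -/
def subsetGraph (n k l : ℕ) :
    SimpleGraph ({s : Finset (Fin n) // s.card = k} ⊕ {s : Finset (Fin n) // s.card = l}) :=
  SimpleGraph.fromRel (fun x y =>
    ∃ s t, x = Sum.inl s ∧ y = Sum.inr t ∧ (s.1 ⊆ t.1 ∨ t.1 ⊆ s.1))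

open Finset

def IsSemiskew {ι : Type*} (r : ι → ι → Prop) : Prop :=
  ∀ i, (∀ j ≠ i, ¬r i j) ∨ (∀ j ≠ i, ¬r j i)

lemma IsSemiskew.mono {ι : Type*} {r s : ι → ι → Prop} (hs : IsSemiskew s)
    (hrs : ∀ i j, r i j → s i j) : IsSemiskew r := fun i =>
  (hs i).imp (fun h j hj hr => h j hj (hrs _ _ hr)) (fun h j hj hr => h j hj (hrs _ _ hr))

lemma linearIndependent_of_isSemiskew {ι K M W : Type*} [Field K] [AddCommGroup M] [Module K M]
    [AddCommGroup W] [Module K W] {w : ι → M} (ψ : ι → M →ₗ[K] W)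
    (hdiag : ∀ i, ψ i (w i) ≠ 0) (hskew : IsSemiskew fun i j => ψ j (w i) ≠ 0) :
    LinearIndependent K w := by
  classical
  rw [linearIndependent_iff']
  intro s g hsum
  have hcoeff : ∀ i ∈ s, (∀ j ∈ s, j ≠ i → g j • ψ i (w j) = 0) → g i = 0 := by
    intro i hi hoff
    have h := congrArg (ψ i) hsum
    rw [map_sum, map_zero, Finset.sum_eq_single_of_mem i hi (fun j hj hji => by
      rw [map_smul]; exact hoff j hj hji)] at h
    simpa [hdiag i] using h
  have hcol : ∀ i ∈ s, (∀ j ≠ i, ψ i (w j) = 0) → g i = 0 := fun i hi hi' =>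
    hcoeff i hi fun j _ hji => by rw [hi' j hji, smul_zero]
  -- In the matrix `(ψ j (w i))`, the coefficient at an index whose column vanishes off the
  -- diagonal is zero; at an index whose row vanishes, every other index has a vanishing row
  -- too or a zero coefficient.
  intro i hi
  refine (hskew i).elim (fun _ => hcoeff i hi fun j hj hji => ?_)
    (fun h => hcol i hi (by simpa using h))
  rcases hskew j with hrowj | hcolj
  · rw [not_not.1 (hrowj i hji.symm), smul_zero]
  · rw [hcol j hj (by simpa using hcolj), zero_smul]

lemma ExteriorAlgebra.ιMulti_ne_zero_of_det_ne_zero {R : Type*} [CommRing R] {N : ℕ}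
    {f : Fin N → Fin N → R} (hf : (Matrix.of f).det ≠ 0) : ExteriorAlgebra.ιMulti R N f ≠ 0 := by
  intro h
  apply hf
  have h' : exteriorPower.ιMulti R N f = 0 := Subtype.ext h
  change Matrix.detRowAlternating f = 0
  rw [← exteriorPower.alternatingMapLinearEquiv_apply_ιMulti, h', map_zero]

def momentVector {K : Type*} [Semiring K] (N : ℕ) (t : K) : Fin N → K := fun c => t ^ (c : ℕ)

lemma ExteriorAlgebra.ιMulti_family_momentVector_ne_zero {K α : Type*} [Field K] [LinearOrder α]
    {N : ℕ} {x : α → K} (hx : Function.Injective x) (s : Set.powersetCard α N) :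
    ExteriorAlgebra.ιMulti_family K N (momentVector N ∘ x) s ≠ 0 := by
  apply ExteriorAlgebra.ιMulti_ne_zero_of_det_ne_zero
  exact Matrix.det_vandermonde_ne_zero_iff.2
    (hx.comp (Set.powersetCard.ofFinEmbEquiv.symm s).injective)

theorem card_le_choose_of_isSemiskew {α ι : Type*} [LinearOrder α] [Countable α] [Fintype ι]
    {k m : ℕ} (A C : ι → Finset α) (hA : ∀ i, #(A i) = k) (hC : ∀ i, #(C i) = m)
    (hdisj : ∀ i, Disjoint (A i) (C i)) (hskew : IsSemiskew fun i j => Disjoint (A i) (C j)) :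
    Fintype.card ι ≤ (k + m).choose k := by
  obtain ⟨x, hx⟩ : ∃ x : α → ℚ, Function.Injective x :=
    let ⟨f, hf⟩ := Countable.exists_injective_nat α
    ⟨fun a => (f a : ℚ), Nat.cast_injective.comp hf⟩
  let v : α → (Fin (k + m) → ℚ) := momentVector (k + m) ∘ x
  let w : ι → ⋀[ℚ]^k (Fin (k + m) → ℚ) := fun i => exteriorPower.ιMulti_family ℚ k v ⟨A i, hA i⟩
  let ψ : ι → ⋀[ℚ]^k (Fin (k + m) → ℚ) →ₗ[ℚ] ExteriorAlgebra ℚ (Fin (k + m) → ℚ) := fun j =>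
    LinearMap.mulRight ℚ (ExteriorAlgebra.ιMulti_family ℚ m v ⟨C j, hC j⟩) ∘ₗ (⋀[ℚ]^k _).subtype
  have hdiag : ∀ i, ψ i (w i) ≠ 0 := fun i => by
    simp only [ψ, w, LinearMap.comp_apply, Submodule.subtype_apply, LinearMap.mulRight_apply,
      exteriorPower.ιMulti_family_apply_coe,
      ExteriorAlgebra.ιMulti_family_mul_of_disjoint ℚ v ⟨A i, hA i⟩ ⟨C i, hC i⟩ (hdisj i)]
    exact (smul_ne_zero_iff_ne _).2 (ExteriorAlgebra.ιMulti_family_momentVector_ne_zero hx _)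
  have hvanish : ∀ i j, ψ j (w i) ≠ 0 → Disjoint (A i) (C j) := fun i j h => by
    by_contra hij
    exact h (ExteriorAlgebra.ιMulti_family_mul_of_not_disjoint ℚ v ⟨A i, hA i⟩ ⟨C j, hC j⟩ hij)
  calc Fintype.card ι ≤ Module.finrank ℚ (⋀[ℚ]^k (Fin (k + m) → ℚ)) :=
        (linearIndependent_of_isSemiskew ψ hdiag (hskew.mono hvanish)).fintype_card_le_finrank
    _ = (k + m).choose k := by rw [exteriorPower.finrank_eq, Module.finrank_fin_fun]

lemma Finset.eq_and_eq_of_sdiff_eq {α : Type*} [DecidableEq α] {A B A' B' : Finset α}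
    (hAB : A ⊆ B) (hA'B' : A' ⊆ B') (hAB' : A ⊆ B') (hcard : #A' ≤ #A) (hD : B \ A = B' \ A') :
    A = A' ∧ B = B' := by
  have hA : A = A' := by
    refine eq_of_subset_of_card_le (fun x hx => ?_) hcard
    by_contra hxA'
    have hxD : x ∈ B \ A := hD ▸ mem_sdiff.2 ⟨hAB' hx, hxA'⟩
    exact (mem_sdiff.1 hxD).2 hx
  refine ⟨hA, ?_⟩
  rw [← union_sdiff_of_subset hAB, ← union_sdiff_of_subset hA'B', hD, hA]

lemma Finset.exists_injOn_lt_choose (α : Type*) [Fintype α] (d : ℕ) :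
    ∃ f : Finset α → ℕ,
      Set.InjOn f {s | #s = d} ∧ ∀ s, #s = d → f s < (Fintype.card α).choose d := by
  classical
  let e := Fintype.equivFin {s : Finset α // #s = d}
  refine ⟨fun s => if h : #s = d then e ⟨s, h⟩ else 0, fun s hs t ht hst => ?_, fun s hs => ?_⟩
  · simp only [Set.mem_ofPred_eq] at hs ht
    simp only [hs, ht, dite_true] at hst
    exact congrArg Subtype.val (e.injective (Fin.val_injective hst))
  · simp only [hs, dite_true]
    have hcard : Fintype.card {s : Finset α // #s = d} = (Fintype.card α).choose d :=
      Fintype.card_finset_len d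
    exact hcard ▸ (e ⟨s, hs⟩).2

section Matchings

variable {G : SimpleGraph V} {M : Set (Sym2 V)}

lemma IsMatchingSet.eq_of_mem_of_mem (hM : IsMatchingSet G M) {e f : Sym2 V} {v : V}
    (he : e ∈ M) (hf : f ∈ M) (hve : v ∈ e) (hvf : v ∈ f) : e = f :=
  by_contra fun hne => hM.2 e he f hf hne v hve hvf

lemma IsStrongMatching.isSemistrongMatching (hM : IsStrongMatching G M) :
    IsSemistrongMatching G M := by
  refine ⟨hM.1, fun e he => ?_⟩
  revert he
  refine Sym2.ind (fun u v he => ⟨u, v, rfl, fun w hw huw => ?_⟩) e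
  have hu : u ∈ edgeVerts M := ⟨_, he, Sym2.mem_mk_left u v⟩
  exact Sym2.congr_right.1 <| hM.1.eq_of_mem_of_mem (hM.2 u hu w hw huw) he
    (Sym2.mem_mk_left u w) (Sym2.mem_mk_left u v)

lemma HasStrongEdgeColoring.hasSemistrongEdgeColoring {t : ℕ}
    (h : HasStrongEdgeColoring G t) : HasSemistrongEdgeColoring G t :=
  let ⟨c, hc, hclass⟩ := h
  ⟨c, hc, fun i => (hclass i).isSemistrongMatching⟩

end Matchings

namespace subsetGraph

variable {n k l : ℕ} {A A' : {s : Finset (Fin n) // s.card = k}}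
  {B B' : {s : Finset (Fin n) // s.card = l}}
  {M : Set (Sym2 ({s : Finset (Fin n) // s.card = k} ⊕ {s : Finset (Fin n) // s.card = l}))}

lemma adj_inl_inr (hkl : k ≤ l) :
    (subsetGraph n k l).Adj (Sum.inl A) (Sum.inr B) ↔ A.1 ⊆ B.1 := by
  rw [subsetGraph, fromRel_adj]
  constructor
  · rintro ⟨-, ⟨_, _, ⟨⟩, ⟨⟩, hAB | hBA⟩ | ⟨_, _, h, -⟩⟩
    · exact hAB
    · exact (eq_of_subset_of_card_le hBA (by rw [A.2, B.2]; exact hkl)).ge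
    · exact absurd h Sum.inr_ne_inl
  · exact fun h => ⟨Sum.inl_ne_inr, Or.inl ⟨A, B, rfl, rfl, Or.inl h⟩⟩

lemma exists_of_mem_edgeSet (hkl : k ≤ l) {e} (he : e ∈ (subsetGraph n k l).edgeSet) :
    ∃ A B, A.1 ⊆ B.1 ∧ e = s(Sum.inl A, Sum.inr B) := by
  revert he
  refine Sym2.ind (fun x y he => ?_) e
  obtain ⟨A, B, rfl, rfl, -⟩ | ⟨A, B, rfl, rfl, -⟩ := he.2
  · exact ⟨A, B, (adj_inl_inr hkl).1 he, rfl⟩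
  · exact ⟨A, B, (adj_inl_inr hkl).1 (adj_symm _ he), Sym2.eq_swap⟩

lemma exists_of_inl_mem_edgeVerts (hkl : k ≤ l)
    (hME : M ⊆ (subsetGraph n k l).edgeSet) (hA : Sum.inl A ∈ edgeVerts M) :
    ∃ B, s(Sum.inl A, Sum.inr B) ∈ M := by
  obtain ⟨e, he, hAe⟩ := hA
  obtain ⟨A', B, -, rfl⟩ := exists_of_mem_edgeSet hkl (hME he)
  obtain rfl : A = A' := by simpa using hAe
  exact ⟨B, he⟩

lemma exists_of_inr_mem_edgeVerts (hkl : k ≤ l)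
    (hME : M ⊆ (subsetGraph n k l).edgeSet) (hB : Sum.inr B ∈ edgeVerts M) :
    ∃ A, s(Sum.inl A, Sum.inr B) ∈ M := by
  obtain ⟨e, he, hBe⟩ := hB
  obtain ⟨A, B', -, rfl⟩ := exists_of_mem_edgeSet hkl (hME he)
  obtain rfl : B = B' := by simpa using hBe
  exact ⟨A, he⟩

lemma isStrongMatching_of_subset_imp_eq (hkl : k ≤ l)
    (hME : M ⊆ (subsetGraph n k l).edgeSet)
    (h : ∀ A A' B B', s(Sum.inl A, Sum.inr B) ∈ M → s(Sum.inl A', Sum.inr B') ∈ M →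
      A.1 ⊆ B'.1 → A = A' ∧ B = B') :
    IsStrongMatching (subsetGraph n k l) M := by
  refine ⟨⟨hME, fun e he f hf hne v hve hvf => hne ?_⟩, fun u hu w hw huw => ?_⟩
  · obtain ⟨A, B, hAB, rfl⟩ := exists_of_mem_edgeSet hkl (hME he)
    obtain ⟨A', B', hA'B', rfl⟩ := exists_of_mem_edgeSet hkl (hME hf)
    have hAB' : A.1 ⊆ B'.1 := by
      rw [Sym2.mem_iff] at hve hvf
      rcases hve with rfl | rfl <;> rcases hvf with h' | h' <;> cases h'
      exacts [hA'B', hAB]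
    obtain ⟨rfl, rfl⟩ := h A A' B B' he hf hAB'
    rfl
  · obtain ⟨A, B, hAB, huw⟩ := exists_of_mem_edgeSet hkl (show s(u, w) ∈ _ from huw)
    have hends : ∀ x ∈ s(Sum.inl A, Sum.inr B), x ∈ edgeVerts M := by
      rw [← huw]
      simp [hu, hw]
    obtain ⟨B₁, h₁⟩ := exists_of_inl_mem_edgeVerts hkl hME (hends _ (Sym2.mem_mk_left _ _))
    obtain ⟨A₂, h₂⟩ := exists_of_inr_mem_edgeVerts hkl hME (hends _ (Sym2.mem_mk_right _ _))
    obtain ⟨rfl, rfl⟩ := h A A₂ B₁ B h₁ h₂ hAB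
    rwa [huw]

def edgeDiff (n k l : ℕ) :
    Sym2 ({s : Finset (Fin n) // s.card = k} ⊕ {s : Finset (Fin n) // s.card = l}) →
      Finset (Fin n) :=
  Sym2.lift ⟨fun x y => symmDiff (Sum.elim (·.1) (·.1) x) (Sum.elim (·.1) (·.1) y),
    fun _ _ => symmDiff_comm _ _⟩

lemma edgeDiff_mk (hAB : A.1 ⊆ B.1) : edgeDiff n k l s(Sum.inl A, Sum.inr B) = B.1 \ A.1 :=
  symmDiff_of_le hAB

lemma card_edgeDiff (hkl : k ≤ l) {e} (he : e ∈ (subsetGraph n k l).edgeSet) :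
    #(edgeDiff n k l e) = l - k := by
  obtain ⟨A, B, hAB, rfl⟩ := exists_of_mem_edgeSet hkl he
  rw [edgeDiff_mk hAB, card_sdiff_of_subset hAB, A.2, B.2]

lemma isStrongMatching_of_edgeDiff_eq (hkl : k ≤ l)
    (hME : M ⊆ (subsetGraph n k l).edgeSet)
    (hD : ∀ e ∈ M, ∀ f ∈ M, edgeDiff n k l e = edgeDiff n k l f) :
    IsStrongMatching (subsetGraph n k l) M := by
  refine isStrongMatching_of_subset_imp_eq hkl hME fun A A' B B' he he' hAB' => ?_
  have hAB := (adj_inl_inr hkl).1 (hME he)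
  have hA'B' := (adj_inl_inr hkl).1 (hME he')
  have h := Finset.eq_and_eq_of_sdiff_eq hAB hA'B' hAB' (by rw [A.2, A'.2])
    (by rw [← edgeDiff_mk hAB, ← edgeDiff_mk hA'B', hD _ he _ he'])
  exact ⟨Subtype.ext h.1, Subtype.ext h.2⟩

theorem hasStrongEdgeColoring (hkl : k ≤ l) :
    HasStrongEdgeColoring (subsetGraph n k l) (n.choose (l - k)) := by
  obtain ⟨f, hinj, hlt⟩ := Finset.exists_injOn_lt_choose (Fin n) (l - k)
  refine ⟨fun e => f (edgeDiff n k l e), fun e he => ?_, fun i => ?_⟩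
  · simpa using hlt _ (card_edgeDiff hkl he)
  · exact isStrongMatching_of_edgeDiff_eq hkl (fun e he => he.1) fun e he e' he' =>
      hinj (card_edgeDiff hkl he.1) (card_edgeDiff hkl he'.1) (he.2.trans he'.2.symm)

lemma isSemiskew_of_isSemistrongMatching (hkl : k ≤ l)
    (hM : IsSemistrongMatching (subsetGraph n k l) M) :
    IsSemiskew fun p q : {p : {s : Finset (Fin n) // s.card = k} ×
      {s : Finset (Fin n) // s.card = l} // s(Sum.inl p.1, Sum.inr p.2) ∈ M} =>
      p.1.1.1 ⊆ q.1.2.1 := by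
  rintro ⟨⟨A, B⟩, hp⟩
  obtain ⟨u, v, huv, hdeg⟩ := hM.2 _ hp
  rcases Sym2.eq_iff.1 huv with ⟨rfl, rfl⟩ | ⟨rfl, rfl⟩
  · refine Or.inl fun ⟨⟨A', B'⟩, hq⟩ hne hAB' => hne ?_
    obtain rfl : B' = B := Sum.inr_injective <|
      hdeg _ ⟨_, hq, Sym2.mem_mk_right _ _⟩ ((adj_inl_inr hkl).2 hAB')
    have h := hM.1.eq_of_mem_of_mem hq hp (Sym2.mem_mk_right _ _) (Sym2.mem_mk_right _ _)
    simp_all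
  · refine Or.inr fun ⟨⟨A', B'⟩, hq⟩ hne hA'B => hne ?_
    obtain rfl : A' = A := Sum.inl_injective <|
      hdeg _ ⟨_, hq, Sym2.mem_mk_left _ _⟩ (adj_symm _ ((adj_inl_inr hkl).2 hA'B))
    have h := hM.1.eq_of_mem_of_mem hq hp (Sym2.mem_mk_left _ _) (Sym2.mem_mk_left _ _)
    simp_all

lemma natCard_le_of_isSemistrongMatching (hkl : k ≤ l)
    (hM : IsSemistrongMatching (subsetGraph n k l) M) :
    Nat.card {p : {s : Finset (Fin n) // s.card = k} × {s : Finset (Fin n) // s.card = l} //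
      s(Sum.inl p.1, Sum.inr p.2) ∈ M} ≤ (k + (n - l)).choose k := by
  classical
  rw [Nat.card_eq_fintype_card]
  refine card_le_choose_of_isSemiskew (fun p => p.1.1.1) (fun p => p.1.2.1ᶜ) (fun p => p.1.1.2)
    (fun p => by rw [card_compl, Fintype.card_fin, p.1.2.2])
    (fun p => disjoint_compl_right_iff.2 ((adj_inl_inr hkl).1 (hM.1.1 p.2))) ?_
  simpa only [disjoint_compl_right_iff] using isSemiskew_of_isSemistrongMatching hkl hM

lemma card_subset_pairs :
    #{p : {s : Finset (Fin n) // s.card = k} × {s : Finset (Fin n) // s.card = l} |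
      p.1.1 ⊆ p.2.1} = n.choose l * l.choose k := by
  have hfiber (B : {s : Finset (Fin n) // s.card = l}) :
      #{A : {s : Finset (Fin n) // s.card = k} | A.1 ⊆ B.1} = l.choose k := by
    have hmap : ({A : {s : Finset (Fin n) // s.card = k} | A.1 ⊆ B.1} : Finset _).map
        (Function.Embedding.subtype _) = powersetCard k B.1 := by
      ext s
      simp [mem_powersetCard, and_comm]
    rw [← card_map, hmap, card_powersetCard, B.2]
  rw [card_filter, ← univ_product_univ, sum_product_right]
  simp only [← card_filter, hfiber, sum_const, card_univ, Fintype.card_finset_len,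
    Fintype.card_fin, smul_eq_mul]

theorem choose_le_of_hasSemistrongEdgeColoring (hkl : k ≤ l) (hln : l ≤ n) {t : ℕ}
    (h : HasSemistrongEdgeColoring (subsetGraph n k l) t) : n.choose (l - k) ≤ t := by
  classical
  obtain ⟨c, hc, hclass⟩ := h
  have hfiber : ∀ i ∈ range t,
      #{p ∈ {p : {s : Finset (Fin n) // s.card = k} × {s : Finset (Fin n) // s.card = l} |
        p.1.1 ⊆ p.2.1} | c s(Sum.inl p.1, Sum.inr p.2) = i} ≤ (k + (n - l)).choose k := by
    intro i _
    refine le_of_eq_of_le ?_ (natCard_le_of_isSemistrongMatching hkl (hclass i))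
    rw [Nat.card_eq_fintype_card, Fintype.card_subtype, filter_filter]
    simp [adj_inl_inr hkl]
  have hcount := card_le_mul_card_image_of_maps_to
    (fun p hp => mem_range.2 (hc _ ((adj_inl_inr hkl).2 (mem_filter.1 hp).2))) _ hfiber
  have hchoose : n.choose l * l.choose k = n.choose (l - k) * (k + (n - l)).choose k := by
    rw [← Nat.choose_symm hkl, Nat.choose_mul (Nat.sub_le l k),
      show n - (l - k) = k + (n - l) by omega, show l - (l - k) = k by omega]
  rw [card_subset_pairs, card_range, hchoose, mul_comm _ t] at hcount
  exact Nat.le_of_mul_le_mul_right hcount (Nat.choose_pos (Nat.le_add_right k _))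

end subsetGraph

/-- For all integers `0 ≤ k ≤ ℓ ≤ n`, the strong chromatic index and the
semistrong chromatic index of the subset graph `S_n(k,ℓ)` are both equal
to `C(n, ℓ-k)`. -/
theorem chromIdx_subsetGraph (n k l : ℕ) (hkl : k ≤ l) (hln : l ≤ n) :
    strongChromIdx (subsetGraph n k l) = n.choose (l - k) ∧
    ssChromIdx (subsetGraph n k l) = n.choose (l - k) := by
  have hstrong := subsetGraph.hasStrongEdgeColoring (n := n) hkl
  have hss : IsLeast {t | HasSemistrongEdgeColoring (subsetGraph n k l) t} (n.choose (l - k)) :=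
    ⟨hstrong.hasSemistrongEdgeColoring,
      fun _ => subsetGraph.choose_le_of_hasSemistrongEdgeColoring hkl hln⟩
  have hs : IsLeast {t | HasStrongEdgeColoring (subsetGraph n k l) t} (n.choose (l - k)) :=
    ⟨hstrong, fun _ ht => hss.2 ht.hasSemistrongEdgeColoring⟩
  exact ⟨hs.csInf_eq, hss.csInf_eq⟩
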